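/- Let k be a positive integer, Λ a row-finite k-graph without sources, and R a commutative ring with 1. Then every nonzero element x of the Kumjian-Pask algebra KP_R(Λ) can be written in normal form: x = Σ_{(α,β)∈F} r_{α,β} s_α s_{β*}, where F is a finite subset of Λ × Λ, r_{α,β} ∈ R∖{0} for every (α,β) ∈ F, and all the β with (α,β) ∈ F have the same degree. -/

import Mathlib

namespace KP

/-- A `k`-graph: a nonempty countable small category `Λ` together with a degree
functor `d : Λ → ℕ^k` satisfying the unique factorization property.  Objects
(vertices) are identified with identity morphisms via `ident`.  The composition
`comp l m` is only meaningful when `s l = r m`. -/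
structure KGraph (k : ℕ) where
  V : Type
  E : Type
  nonemptyV : Nonempty V
  countableE : Countable E
  r : E → V
  s : E → V
  d : E → Fin k → ℕ
  ident : V → E
  comp : E → E → E
  r_ident : ∀ v, r (ident v) = v
  s_ident : ∀ v, s (ident v) = v
  d_ident : ∀ v, d (ident v) = 0
  r_comp : ∀ ⦃l m : E⦄, s l = r m → r (comp l m) = r l
  s_comp : ∀ ⦃l m : E⦄, s l = r m → s (comp l m) = s m
  d_comp : ∀ ⦃l m : E⦄, s l = r m → d (comp l m) = d l + d m
  comp_assoc : ∀ ⦃l m n : E⦄, s l = r m → s m = r n →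
    comp (comp l m) n = comp l (comp m n)
  ident_comp : ∀ l : E, comp (ident (r l)) l = l
  comp_ident : ∀ l : E, comp l (ident (s l)) = l
  eq_ident_of_d_eq_zero : ∀ l : E, d l = 0 → l = ident (r l)
  factor : ∀ (l : E) (m n : Fin k → ℕ), d l = m + n →
    ∃! p : E × E, d p.1 = m ∧ d p.2 = n ∧ s p.1 = r p.2 ∧ comp p.1 p.2 = l

namespace KGraph

variable {k : ℕ}

/-- `Λ` is row-finite if every `vΛ^n` is finite. -/
def RowFinite (Λ : KGraph k) : Prop :=
  ∀ (v : Λ.V) (n : Fin k → ℕ), {l : Λ.E | Λ.r l = v ∧ Λ.d l = n}.Finite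

/-- `Λ` has no sources if every `vΛ^n` is nonempty. -/
def NoSources (Λ : KGraph k) : Prop :=
  ∀ (v : Λ.V) (n : Fin k → ℕ), ∃ l : Λ.E, Λ.r l = v ∧ Λ.d l = n

/-- `H ⊆ Λ^0` is hereditary if `r(l) ∈ H` implies `s(l) ∈ H`. -/
def HereditarySet (Λ : KGraph k) (H : Set Λ.V) : Prop :=
  ∀ l : Λ.E, Λ.r l ∈ H → Λ.s l ∈ H

/-- `H ⊆ Λ^0` is saturated if `s(vΛ^n) ⊆ H` implies `v ∈ H`. -/
def SaturatedSet (Λ : KGraph k) (H : Set Λ.V) : Prop :=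
  ∀ (v : Λ.V) (n : Fin k → ℕ),
    (∀ l : Λ.E, Λ.r l = v → Λ.d l = n → Λ.s l ∈ H) → v ∈ H

open Classical in
/-- The segment `l(p,q)` of a path `l`: the unique middle factor in a
factorization `l = l'l''l'''` with `d l' = p` and `d l'' = q - p` (when `p ≤ q ≤ d l`). -/
noncomputable def seg (Λ : KGraph k) (l : Λ.E) (p q : Fin k → ℕ) : Λ.E :=
  if h : ∃ t : Λ.E × Λ.E × Λ.E, Λ.d t.1 = p ∧ Λ.d t.2.1 = q - p ∧
      Λ.s t.1 = Λ.r t.2.1 ∧ Λ.s t.2.1 = Λ.r t.2.2 ∧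
      Λ.comp t.1 (Λ.comp t.2.1 t.2.2) = l
  then (Classical.choose h).2.1 else l

/-- Aperiodicity in the finite-path formulation of Robertson and Sims. -/
def Aperiodic (Λ : KGraph k) : Prop :=
  ∀ (v : Λ.V) (m n : Fin k → ℕ), m ≠ n →
    ∃ l : Λ.E, Λ.r l = v ∧ m ⊔ n ≤ Λ.d l ∧
      Λ.seg l m (m + Λ.d l - m ⊔ n) ≠ Λ.seg l n (n + Λ.d l - m ⊔ n)

end KGraph

/-- An infinite path in `Λ`: a degree-preserving functor `x : Ω_k → Λ`,
recorded by its segments `x.f p q = x(p,q)` for `p ≤ q`. -/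
structure InfPath {k : ℕ} (Λ : KGraph k) where
  f : (Fin k → ℕ) → (Fin k → ℕ) → Λ.E
  deg : ∀ p q : Fin k → ℕ, p ≤ q → Λ.d (f p q) = q - p
  compat : ∀ p q u : Fin k → ℕ, p ≤ q → q ≤ u → Λ.s (f p q) = Λ.r (f q u)
  comp_f : ∀ p q u : Fin k → ℕ, p ≤ q → q ≤ u → Λ.comp (f p q) (f q u) = f p u

/-- The vertex `x(n)` of an infinite path. -/
def InfPath.vtx {k : ℕ} {Λ : KGraph k} (x : InfPath Λ) (n : Fin k → ℕ) : Λ.V :=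
  Λ.r (x.f n n)

/-- `Λ` is cofinal if for every infinite path `x` and vertex `v` there is `n`
with `vΛx(n)` nonempty. -/
def KGraph.Cofinal {k : ℕ} (Λ : KGraph k) : Prop :=
  ∀ (x : InfPath Λ) (v : Λ.V), ∃ (n : Fin k → ℕ) (l : Λ.E),
    Λ.r l = v ∧ Λ.s l = x.vtx n

/-- A Kumjian-Pask `Λ`-family in a ring `A`.  `P v = P_v`, `S l = S_l` and
`S' l = S_{l*}`; by convention `S` and `S'` are extended to vertices (paths of
degree `0`) by `S_v = S_{v*} = P_v`. -/
structure KPFamily {k : ℕ} (Λ : KGraph k) (A : Type) [Ring A] where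
  P : Λ.V → A
  S : Λ.E → A
  S' : Λ.E → A
  S_ident : ∀ v, S (Λ.ident v) = P v
  S'_ident : ∀ v, S' (Λ.ident v) = P v
  idem : ∀ v, P v * P v = P v
  orth : ∀ v w, v ≠ w → P v * P w = 0
  mul_S : ∀ ⦃l m : Λ.E⦄, Λ.d l ≠ 0 → Λ.d m ≠ 0 → Λ.s l = Λ.r m →
    S l * S m = S (Λ.comp l m)
  mul_S' : ∀ ⦃l m : Λ.E⦄, Λ.d l ≠ 0 → Λ.d m ≠ 0 → Λ.s l = Λ.r m →
    S' m * S' l = S' (Λ.comp l m)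
  P_mul_S : ∀ l : Λ.E, Λ.d l ≠ 0 → P (Λ.r l) * S l = S l
  S_mul_P : ∀ l : Λ.E, Λ.d l ≠ 0 → S l * P (Λ.s l) = S l
  P_mul_S' : ∀ l : Λ.E, Λ.d l ≠ 0 → P (Λ.s l) * S' l = S' l
  S'_mul_P : ∀ l : Λ.E, Λ.d l ≠ 0 → S' l * P (Λ.r l) = S' l
  KP3_eq : ∀ l : Λ.E, Λ.d l ≠ 0 → S' l * S l = P (Λ.s l)
  KP3_ne : ∀ l m : Λ.E, Λ.d l ≠ 0 → Λ.d l = Λ.d m → l ≠ m → S' l * S m = 0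
  KP4 : ∀ (v : Λ.V) (n : Fin k → ℕ), n ≠ 0 → ∀ F : Finset Λ.E,
    (∀ l : Λ.E, l ∈ F ↔ Λ.r l = v ∧ Λ.d l = n) →
    P v = ∑ l ∈ F, S l * S' l

/-- The Kumjian-Pask algebra of `Λ` with coefficients in `R`: an `R`-algebra
`A` together with a generating Kumjian-Pask family `(p,s)` which is universal
for Kumjian-Pask `Λ`-families, carries a `ℤ^k`-grading with the prescribed
homogeneous components, and in which `r • p_v ≠ 0` for `r ≠ 0`. -/
structure KPAlgebra {k : ℕ} (Λ : KGraph k) (R : Type) [CommRing R]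
    (A : Type) [Ring A] [Algebra R A] where
  fam : KPFamily Λ A
  universal : ∀ (B : Type) [Ring B] [Algebra R B] (QT : KPFamily Λ B),
    ∃! φ : A →ₐ[R] B,
      (∀ v, φ (fam.P v) = QT.P v) ∧
      (∀ l, Λ.d l ≠ 0 → φ (fam.S l) = QT.S l) ∧
      (∀ l, Λ.d l ≠ 0 → φ (fam.S' l) = QT.S' l)
  grading : (Fin k → ℤ) → AddSubgroup A
  grading_mul : ∀ (m n : Fin k → ℤ), ∀ a ∈ grading m, ∀ b ∈ grading n,
    a * b ∈ grading (m + n)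
  grading_internal : DirectSum.IsInternal grading
  grading_eq : ∀ n : Fin k → ℤ, (grading n : Set A) =
    ↑(Submodule.span R {x : A | ∃ l m : Λ.E,
      (fun i => (Λ.d l i : ℤ) - (Λ.d m i : ℤ)) = n ∧ x = fam.S l * fam.S' m})
  smul_P_ne_zero : ∀ (v : Λ.V) (c : R), c ≠ 0 → c • fam.P v ≠ 0

/-- A `G`-grading on a ring `A`: additive subgroups with `A_g A_h ⊆ A_{g+h}`
such that `A` is their internal direct sum. -/
def IsGrading {G A : Type} [AddCommGroup G] [DecidableEq G] [Ring A]
    (gr : G → AddSubgroup A) : Prop :=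
  (∀ g h : G, ∀ a ∈ gr g, ∀ b ∈ gr h, a * b ∈ gr (g + h)) ∧
  DirectSum.IsInternal gr

/-- An ideal `I` is graded when every element of `I` is a sum of homogeneous
elements of `I`, i.e. `I = Σ_g (I ∩ A_g)`. -/
def IsGradedIdeal {G A : Type} [Ring A] (gr : G → AddSubgroup A)
    (I : TwoSidedIdeal A) : Prop :=
  ∀ x ∈ I, x ∈ AddSubgroup.closure {y : A | y ∈ I ∧ ∃ g : G, y ∈ gr g}

/-- An ideal `I` of `KP_R(Λ)` is basic if `c • p_v ∈ I` with `c ≠ 0` implies `p_v ∈ I`. -/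
def IsBasic {k : ℕ} {Λ : KGraph k} {R : Type} [CommRing R]
    {A : Type} [Ring A] [Algebra R A] (KP : KPAlgebra Λ R A)
    (I : TwoSidedIdeal A) : Prop :=
  ∀ (c : R) (v : Λ.V), c ≠ 0 → c • KP.fam.P v ∈ I → KP.fam.P v ∈ I

/-- An ideal is idempotent if it is spanned by products `a * b` with `a, b ∈ I`. -/
def IsIdempotentIdeal {A : Type} [Ring A] (I : TwoSidedIdeal A) : Prop :=
  (I : Set A) ⊆ ↑(AddSubgroup.closure {x : A | ∃ a ∈ I, ∃ b ∈ I, x = a * b})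

/-- `RestrCompat Λ H Λ' eV eE` asserts that `Λ'` is (a realization of) the
subgraph `Λ∖H = (Λ^0∖H, {l ∈ Λ : s(l) ∉ H}, r, s)` with the restricted
structure maps, the identifications being given by the equivalences `eV`, `eE`. -/
def RestrCompat {k : ℕ} (Λ : KGraph k) (H : Set Λ.V) (Λ' : KGraph k)
    (eV : Λ'.V ≃ {v : Λ.V // v ∉ H}) (eE : Λ'.E ≃ {l : Λ.E // Λ.s l ∉ H}) : Prop :=
  (∀ l : Λ'.E, (eV (Λ'.r l)).1 = Λ.r (eE l).1) ∧
  (∀ l : Λ'.E, (eV (Λ'.s l)).1 = Λ.s (eE l).1) ∧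
  (∀ l : Λ'.E, Λ'.d l = Λ.d (eE l).1) ∧
  (∀ v : Λ'.V, (eE (Λ'.ident v)).1 = Λ.ident (eV v).1) ∧
  (∀ l m : Λ'.E, Λ'.s l = Λ'.r m →
    (eE (Λ'.comp l m)).1 = Λ.comp (eE l).1 (eE m).1)

/-- `Ind M`: the ideal of `KP_R(Λ)` induced by a set (ideal) `M` of coefficients,
`Ind M = span_R {c • s_a s_{b*} : c ∈ M, a b ∈ Λ}`. -/
def IndSpan {k : ℕ} {Λ : KGraph k} {R : Type} [CommRing R]
    {A : Type} [Ring A] [Algebra R A] (KP : KPAlgebra Λ R A) (M : Set R) :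
    Submodule R A :=
  Submodule.span R {x : A | ∃ c ∈ M, ∃ a b : Λ.E, x = c • (KP.fam.S a * KP.fam.S' b)}

/-- `Res I = {c ∈ R : c • p_v ∈ I for all v ∈ Λ^0}`. -/
def ResSet {k : ℕ} {Λ : KGraph k} {R : Type} [CommRing R]
    {A : Type} [Ring A] [Algebra R A] (KP : KPAlgebra Λ R A) (I : Set A) : Set R :=
  {c : R | ∀ v : Λ.V, c • KP.fam.P v ∈ I}


/-!
Fix a common degree `n` dominating the degrees of the `b` in a finite expression of `x` as an
`R`-combination of monomials `s_a s_{b*}`. For `s(a) = s(b)` and `m = n - d(b) ≠ 0`, (KP4) at `s(b)`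
gives `s_a s_{b*} = Σ_{l ∈ s(b)Λ^m} s_{al} s_{(bl)*}`, a finite sum by row-finiteness, whose terms all
have `d(bl) = n`; for `s(a) ≠ s(b)` the monomial vanishes. Collecting coefficients gives the normal form.
-/

lemma KGraph.s_eq_r_of_d_eq_zero {k : ℕ} (Λ : KGraph k) {l : Λ.E} (hl : Λ.d l = 0) :
    Λ.s l = Λ.r l := by
  rw [Λ.eq_ident_of_d_eq_zero l hl, Λ.s_ident, Λ.r_ident]

lemma KGraph.comp_eq_of_d_eq_zero {k : ℕ} (Λ : KGraph k) {a l : Λ.E} (ha : Λ.d a = 0)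
    (h : Λ.s a = Λ.r l) : Λ.comp a l = l := by
  rw [Λ.eq_ident_of_d_eq_zero a ha, ← Λ.s_eq_r_of_d_eq_zero ha, h, Λ.ident_comp]

namespace KPFamily

variable {k : ℕ} {Λ : KGraph k} {A : Type} [Ring A] (fam : KPFamily Λ A)

lemma S_mul_P_s (l : Λ.E) : fam.S l * fam.P (Λ.s l) = fam.S l := by
  by_cases hl : Λ.d l = 0
  · rw [Λ.eq_ident_of_d_eq_zero l hl, fam.S_ident, Λ.s_ident, fam.idem]
  · exact fam.S_mul_P l hl

lemma P_s_mul_S' (l : Λ.E) : fam.P (Λ.s l) * fam.S' l = fam.S' l := by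
  by_cases hl : Λ.d l = 0
  · rw [Λ.eq_ident_of_d_eq_zero l hl, fam.S'_ident, Λ.s_ident, fam.idem]
  · exact fam.P_mul_S' l hl

lemma S_mul_S'_eq_zero_of_s_ne {a b : Λ.E} (h : Λ.s a ≠ Λ.s b) :
    fam.S a * fam.S' b = 0 := by
  rw [← fam.S_mul_P_s a, ← fam.P_s_mul_S' b, mul_assoc, ← mul_assoc (fam.P _),
    fam.orth _ _ h, zero_mul, mul_zero]

lemma S_mul_S_eq_S_comp {a l : Λ.E} (h : Λ.s a = Λ.r l) (hl : Λ.d l ≠ 0) :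
    fam.S a * fam.S l = fam.S (Λ.comp a l) := by
  by_cases ha : Λ.d a = 0
  · rw [Λ.comp_eq_of_d_eq_zero ha h, Λ.eq_ident_of_d_eq_zero a ha, fam.S_ident,
      ← Λ.s_eq_r_of_d_eq_zero ha, h, fam.P_mul_S l hl]
  · exact fam.mul_S ha hl h

lemma S'_mul_S'_eq_S'_comp {b l : Λ.E} (h : Λ.s b = Λ.r l) (hl : Λ.d l ≠ 0) :
    fam.S' l * fam.S' b = fam.S' (Λ.comp b l) := by
  by_cases hb : Λ.d b = 0
  · rw [Λ.comp_eq_of_d_eq_zero hb h, Λ.eq_ident_of_d_eq_zero b hb, fam.S'_ident,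
      ← Λ.s_eq_r_of_d_eq_zero hb, h, fam.S'_mul_P l hl]
  · exact fam.mul_S' hb hl h

lemma S_mul_S'_eq_sum_comp {a b : Λ.E} (hs : Λ.s a = Λ.s b) {m : Fin k → ℕ} (hm : m ≠ 0)
    (F : Finset Λ.E) (hF : ∀ l, l ∈ F ↔ Λ.r l = Λ.s b ∧ Λ.d l = m) :
    fam.S a * fam.S' b = ∑ l ∈ F, fam.S (Λ.comp a l) * fam.S' (Λ.comp b l) := by
  rw [← fam.P_s_mul_S' b, fam.KP4 _ m hm F hF, Finset.sum_mul, Finset.mul_sum]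
  refine Finset.sum_congr rfl fun l hl => ?_
  obtain ⟨hrl, hdl⟩ := (hF l).1 hl
  have hl0 : Λ.d l ≠ 0 := hdl ▸ hm
  rw [← fam.S_mul_S_eq_S_comp (hs.trans hrl.symm) hl0,
    ← fam.S'_mul_S'_eq_S'_comp hrl.symm hl0]
  simp only [mul_assoc]

variable (R : Type) [CommRing R] [Algebra R A]

def spanOfDegree (n : Fin k → ℕ) : Submodule R A :=
  Submodule.span R ((fun p : Λ.E × Λ.E => fam.S p.1 * fam.S' p.2) '' {p | Λ.d p.2 = n})

variable {R}

lemma S_mul_S'_mem_spanOfDegree (hrf : Λ.RowFinite) {a b : Λ.E} {n : Fin k → ℕ}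
    (hn : Λ.d b ≤ n) : fam.S a * fam.S' b ∈ fam.spanOfDegree R n := by
  classical
  by_cases hs : Λ.s a = Λ.s b
  swap
  · rw [fam.S_mul_S'_eq_zero_of_s_ne hs]
    exact zero_mem _
  by_cases hm : n - Λ.d b = 0
  · exact Submodule.subset_span ⟨(a, b), le_antisymm hn (tsub_eq_zero_iff_le.1 hm), rfl⟩
  set F := (hrf (Λ.s b) (n - Λ.d b)).toFinset
  have hF : ∀ l, l ∈ F ↔ Λ.r l = Λ.s b ∧ Λ.d l = n - Λ.d b := fun l =>
    Set.Finite.mem_toFinset _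
  rw [fam.S_mul_S'_eq_sum_comp hs hm F hF]
  refine Submodule.sum_mem _ fun l hl => Submodule.subset_span ⟨(Λ.comp a l, Λ.comp b l), ?_, rfl⟩
  obtain ⟨hrl, hdl⟩ := (hF l).1 hl
  change Λ.d (Λ.comp b l) = n
  rw [Λ.d_comp hrl.symm, hdl, add_tsub_cancel_of_le hn]

lemma spanOfDegree_mono (hrf : Λ.RowFinite) : Monotone (fam.spanOfDegree R) := by
  intro m n hmn
  refine Submodule.span_le.2 ?_
  rintro _ ⟨p, hp, rfl⟩
  exact fam.S_mul_S'_mem_spanOfDegree hrf ((le_of_eq hp).trans hmn)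

end KPFamily

namespace KPAlgebra

variable {k : ℕ} {Λ : KGraph k} {R : Type} [CommRing R] {A : Type} [Ring A] [Algebra R A]
  (KP : KPAlgebra Λ R A)

lemma mem_span_S_mul_S' (x : A) :
    x ∈ Submodule.span R (Set.range fun p : Λ.E × Λ.E => KP.fam.S p.1 * KP.fam.S' p.2) := by
  classical
  obtain ⟨y, rfl⟩ := KP.grading_internal.surjective x
  induction y using DirectSum.induction_on with
  | zero => simp
  | of i z =>
    rw [DirectSum.coeAddMonoidHom_of]
    have hz : (z : A) ∈ (KP.grading i : Set A) := z.2
    rw [KP.grading_eq] at hz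
    refine Submodule.span_mono ?_ hz
    rintro _ ⟨a, b, -, rfl⟩
    exact ⟨(a, b), rfl⟩
  | add u v hu hv =>
    rw [map_add]
    exact add_mem hu hv

lemma exists_mem_spanOfDegree (hrf : Λ.RowFinite) (x : A) :
    ∃ n, x ∈ KP.fam.spanOfDegree R n := by
  have hle : Submodule.span R (Set.range fun p : Λ.E × Λ.E => KP.fam.S p.1 * KP.fam.S' p.2) ≤
      ⨆ n, KP.fam.spanOfDegree R n := by
    refine Submodule.span_le.2 ?_
    rintro _ ⟨p, rfl⟩
    exact Submodule.mem_iSup_of_mem (Λ.d p.2) (Submodule.subset_span ⟨p, rfl, rfl⟩)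
  exact (Submodule.mem_iSup_of_directed _ (KP.fam.spanOfDegree_mono hrf).directed_le).1
    (hle (KP.mem_span_S_mul_S' x))

end KPAlgebra

lemma _root_.Submodule.exists_finset_sum_smul_of_mem_span_image {R M ι : Type*} [Semiring R]
    [AddCommMonoid M] [Module R M] {v : ι → M} {s : Set ι} {x : M}
    (hx : x ∈ Submodule.span R (v '' s)) :
    ∃ (F : Finset ι) (c : ι → R),
      x = ∑ i ∈ F, c i • v i ∧ (∀ i ∈ F, c i ≠ 0) ∧ ∀ i ∈ F, i ∈ s := by
  obtain ⟨l, hls, rfl⟩ := (Finsupp.mem_span_image_iff_linearCombination R).1 hx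
  exact ⟨l.support, l, Finsupp.linearCombination_apply R l, fun i => Finsupp.mem_support_iff.1,
    fun i hi => hls hi⟩

theorem exists_normal_form_general (k : ℕ) (Λ : KGraph k)
    (hrf : Λ.RowFinite)
    (R : Type) [CommRing R] (A : Type) [Ring A] [Algebra R A]
    (KP : KPAlgebra Λ R A) (x : A) :
    ∃ (F : Finset (Λ.E × Λ.E)) (c : Λ.E × Λ.E → R) (n : Fin k → ℕ),
      x = ∑ p ∈ F, c p • (KP.fam.S p.1 * KP.fam.S' p.2) ∧
      (∀ p ∈ F, c p ≠ 0) ∧ (∀ p ∈ F, Λ.d p.2 = n) := by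
  obtain ⟨n, hn⟩ := KP.exists_mem_spanOfDegree hrf x
  obtain ⟨F, c, rfl, hc, hF⟩ := Submodule.exists_finset_sum_smul_of_mem_span_image hn
  exact ⟨F, c, n, rfl, hc, hF⟩

/-- **Lemma 4.2 (normal form).**  Every nonzero `x ∈ KP_R(Λ)` can be written
as `x = Σ_{(a,b) ∈ F} c_{a,b} • s_a s_{b*}` where `F` is a finite subset of
`Λ × Λ`, all coefficients `c_{a,b}` are nonzero, and all the `b` occurring in
`F` have the same degree `n`. -/
theorem exists_normal_form (k : ℕ) (hk : 0 < k) (Λ : KGraph k)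
    (hrf : Λ.RowFinite) (hns : Λ.NoSources)
    (R : Type) [CommRing R] (A : Type) [Ring A] [Algebra R A]
    (KP : KPAlgebra Λ R A) (x : A) (hx : x ≠ 0) :
    ∃ (F : Finset (Λ.E × Λ.E)) (c : Λ.E × Λ.E → R) (n : Fin k → ℕ),
      x = ∑ p ∈ F, c p • (KP.fam.S p.1 * KP.fam.S' p.2) ∧
      (∀ p ∈ F, c p ≠ 0) ∧ (∀ p ∈ F, Λ.d p.2 = n) :=
  exists_normal_form_general k Λ hrf R A KP x

end KP
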